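/- For any B, B' ∈ GL_n(ℝ), one has Ker L^Ψ_B = Img L^Φ_B if and only if Ker L^Ψ_{B'} = Img L^Φ_{B'}. -/

import Mathlib

open scoped RealInnerProductSpace

noncomputable section

/-- `ℝ^n` with the Euclidean inner product and norm. -/
abbrev E (n : ℕ) : Type := EuclideanSpace ℝ (Fin n)

/-- The symmetric bilinear map `Q_v(ξ,η) = ⟨ξ,η⟩·v − ⟨ξ,v⟩·η − ⟨η,v⟩·ξ`. -/
def Qv {n : ℕ} (v ξ η : E n) : E n := ⟪ξ, η⟫ • v - ⟪ξ, v⟫ • η - ⟪η, v⟫ • ξ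

/-- The bracket `[Q,Q']` of two (symmetric bilinear) maps. -/
def brk {n : ℕ} (Q Q' : E n → E n → E n) (ξ η θ : E n) : E n :=
  (Q ξ (Q' η θ) + Q η (Q' θ ξ) + Q θ (Q' ξ η))
    - (Q' ξ (Q η θ) + Q' η (Q θ ξ) + Q' θ (Q ξ η))

/-- A map `ℝ^n × ℝ^n → ℝ^n` is a symmetric bilinear map. -/
def IsSymmBilin {n : ℕ} (q : E n → E n → E n) : Prop :=
  (∀ ξ η, q ξ η = q η ξ) ∧ ∀ ξ, IsLinearMap ℝ (q ξ)

/-- The standard basis vectors `e_1, …, e_n` of `ℝ^n`. -/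
def stdE (n : ℕ) (i : Fin n) : E n := EuclideanSpace.single i 1

/-- The `i`-th component of `L^Φ_B (A', B')`, where `v = v_i` is the `i`-th column of `B`
and `ω = ω_i` the `i`-th column of `B'`. -/
def LPhiC {n : ℕ} (A' : E n →ₗ[ℝ] E n) (v ω : E n) (ξ η : E n) : E n :=
  A' (Qv v ξ η) - Qv v (A' ξ) η - Qv v ξ (A' η) + Qv ω ξ η

/-- `(q_1,…,q_n)` lies in the kernel of `L^Ψ_B`, where `v i` are the columns of `B`. -/
def KerPsi {n : ℕ} (v : Fin n → E n) (q : Fin n → E n → E n → E n) : Prop :=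
  ∀ i j : Fin n, i < j → ∀ ξ η θ : E n,
    brk (q i) (Qv (v j)) ξ η θ = brk (q j) (Qv (v i)) ξ η θ

/-- `(q_1,…,q_n)` lies in the subspace `W`; `i0` is the index of the first coordinate. -/
def memW {n : ℕ} (i0 : Fin n) (q : Fin n → E n → E n → E n) : Prop :=
  (∀ j, q j (stdE n j) (stdE n j) = 0) ∧
  (∀ i j, ⟪stdE n i, q j (stdE n i) (stdE n i)⟫ + ⟪stdE n j, q i (stdE n j) (stdE n j)⟫ = 0) ∧
  (∀ j, ⟪stdE n i0, q i0 (stdE n j) (stdE n j)⟫ = 0)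

/-!
Writing `B' = B C` with `C` invertible, the linear change of variables `q ↦ (∑ₖ C_{ki} q_k)ᵢ`
maps `Ker L^Ψ_B` onto `Ker L^Ψ_{B'}` and `Img L^Φ_B` onto `Img L^Φ_{B'}`: `Q_v` is linear in `v`,
the bracket is bilinear, and the `i`-th component of `L^Φ` is linear in `(v_i, ω_i)`.
-/

/-- The columns of `W C`, where `w` are the columns of `W`. -/
def recombine {ι R M : Type*} [Fintype ι] [Semiring R] [AddCommMonoid M] [Module R M]
    (C : Matrix ι ι R) (w : ι → M) : ι → M :=
  fun i => ∑ k, C k i • w k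

section recombine

variable {ι R M : Type*} [Fintype ι] [AddCommMonoid M]

lemma recombine_apply [Semiring R] [Module R M] (C : Matrix ι ι R) (w : ι → M) (i : ι) :
    recombine C w i = ∑ k, C k i • w k := rfl

lemma recombine_recombine [CommSemiring R] [Module R M] (C D : Matrix ι ι R) (w : ι → M) :
    recombine C (recombine D w) = recombine (D * C) w := by
  funext i
  simp only [recombine, Matrix.mul_apply, Finset.smul_sum, Finset.sum_smul, smul_smul]
  rw [Finset.sum_comm]
  simp only [mul_comm]

lemma recombine_one [Semiring R] [Module R M] [DecidableEq ι] (w : ι → M) : recombine (1 : Matrix ι ι R) w = w := by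
  funext i
  simp [recombine, Matrix.one_apply]

end recombine

lemma exists_recombine_eq {K V ι : Type*} [Field K] [AddCommGroup V] [Module K V]
    [FiniteDimensional K V] [Fintype ι] [DecidableEq ι] {w w' : ι → V}
    (hw : LinearIndependent K w) (hw' : LinearIndependent K w')
    (hcard : Fintype.card ι = Module.finrank K V) :
    ∃ C D : Matrix ι ι K, D * C = 1 ∧ recombine C w = w' := by
  let b := basisOfLinearIndependentOfCardEqFinrank' w hw hcard
  let b' := basisOfLinearIndependentOfCardEqFinrank' w' hw' hcard
  refine ⟨b.toMatrix w', b'.toMatrix w, by simpa [b, b'] using b'.toMatrix_mul_toMatrix_flip b, ?_⟩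
  funext j
  simpa [b, recombine_apply] using b.sum_toMatrix_smul_self w' j

lemma IsLinearMap.map_sum_smul {ι R M N : Type*} [Fintype ι] [Semiring R] [AddCommMonoid M]
    [AddCommMonoid N] [Module R M] [Module R N] {f : M → N} (hf : IsLinearMap R f)
    (c : ι → R) (x : ι → M) : f (∑ k, c k • x k) = ∑ k, c k • f (x k) := by
  simpa only [IsLinearMap.mk'_apply, hf.map_smul] using
    map_sum (IsLinearMap.mk' f hf) (fun k => c k • x k) Finset.univ

variable {n : ℕ}

lemma isSymmBilin_recombine {q : Fin n → E n → E n → E n} (hq : ∀ k, IsSymmBilin (q k))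
    (C : Matrix (Fin n) (Fin n) ℝ) (i : Fin n) : IsSymmBilin (recombine C q i) := by
  refine ⟨fun ξ η => by simp [recombine_apply, (hq _).1 ξ η], fun ξ => ⟨fun x y => ?_, fun c x => ?_⟩⟩
  · simp [recombine_apply, ((hq _).2 ξ).map_add, Finset.sum_add_distrib]
  · simp [recombine_apply, ((hq _).2 ξ).map_smul, Finset.smul_sum, smul_comm c]

lemma Qv_sum_smul (w : Fin n → E n) (c : Fin n → ℝ) (ξ η : E n) :
    Qv (∑ k, c k • w k) ξ η = ∑ k, c k • Qv (w k) ξ η := by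
  simp only [Qv, inner_sum, real_inner_smul_right, Finset.sum_smul, Finset.smul_sum,
    smul_smul, smul_sub, Finset.sum_sub_distrib]
  simp [mul_comm]

lemma Qv_recombine (C : Matrix (Fin n) (Fin n) ℝ) (w : Fin n → E n) (i : Fin n) :
    Qv (recombine C w i) = recombine C (fun l => Qv (w l)) i := by
  funext ξ η
  simp [recombine_apply, Qv_sum_smul]

lemma isSymmBilin_Qv (v : E n) : IsSymmBilin (Qv v) := by
  refine ⟨fun ξ η => ?_, fun ξ => ⟨fun x y => ?_, fun c x => ?_⟩⟩
  · simp only [Qv, real_inner_comm ξ η]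
    abel
  · simp only [Qv, inner_add_right, inner_add_left, add_smul, smul_add]
    abel
  · simp only [Qv, inner_smul_right, real_inner_smul_left, smul_sub, smul_smul, mul_comm c]

lemma brk_neg_swap (Q P : E n → E n → E n) (ξ η θ : E n) :
    brk Q P ξ η θ = -brk P Q ξ η θ := by
  simp only [brk]
  abel

lemma brk_sum_smul_left (Q : Fin n → E n → E n → E n) {P : E n → E n → E n}
    (hP : ∀ ξ, IsLinearMap ℝ (P ξ)) (c : Fin n → ℝ) (ξ η θ : E n) :
    brk (∑ k, c k • Q k) P ξ η θ = ∑ k, c k • brk (Q k) P ξ η θ := by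
  simp only [brk, Finset.sum_apply, Pi.smul_apply, (hP _).map_sum_smul, smul_sub, smul_add,
    Finset.sum_sub_distrib, Finset.sum_add_distrib]

lemma brk_sum_smul_right {Q : E n → E n → E n} (hQ : ∀ ξ, IsLinearMap ℝ (Q ξ))
    (P : Fin n → E n → E n → E n) (d : Fin n → ℝ) (ξ η θ : E n) :
    brk Q (∑ l, d l • P l) ξ η θ = ∑ l, d l • brk Q (P l) ξ η θ := by
  simp only [brk_neg_swap Q, brk_sum_smul_left P hQ, ← Finset.sum_neg_distrib, smul_neg]

lemma brk_recombine_Qv {q : Fin n → E n → E n → E n} (hq : ∀ k, IsSymmBilin (q k))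
    (C : Matrix (Fin n) (Fin n) ℝ) (w : Fin n → E n) (i j : Fin n) (ξ η θ : E n) :
    brk (recombine C q i) (Qv (recombine C w j)) ξ η θ
      = ∑ k, ∑ l, (C k i * C l j) • brk (q k) (Qv (w l)) ξ η θ := by
  rw [Qv_recombine, recombine_apply C q i,
    brk_sum_smul_left q fun ξ => (isSymmBilin_recombine (fun l => isSymmBilin_Qv (w l)) C j).2 ξ]
  refine Finset.sum_congr rfl fun k _ => ?_
  rw [recombine_apply, brk_sum_smul_right (hq k).2, Finset.smul_sum]
  simp only [smul_smul]

lemma kerPsi_iff_forall (v : Fin n → E n) (q : Fin n → E n → E n → E n) :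
    KerPsi v q ↔ ∀ i j ξ η θ, brk (q i) (Qv (v j)) ξ η θ = brk (q j) (Qv (v i)) ξ η θ := by
  refine ⟨fun h i j ξ η θ => ?_, fun h i j _ => h i j⟩
  rcases lt_trichotomy i j with hij | rfl | hij
  · exact h i j hij ξ η θ
  · rfl
  · exact (h j i hij ξ η θ).symm

lemma kerPsi_recombine {w : Fin n → E n} {q : Fin n → E n → E n → E n}
    (hq : ∀ k, IsSymmBilin (q k)) (h : KerPsi w q) (C : Matrix (Fin n) (Fin n) ℝ) :
    KerPsi (recombine C w) (recombine C q) := by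
  rw [kerPsi_iff_forall] at h ⊢
  intro i j ξ η θ
  rw [brk_recombine_Qv hq, brk_recombine_Qv hq, Finset.sum_comm]
  refine Finset.sum_congr rfl fun l _ => Finset.sum_congr rfl fun k _ => ?_
  rw [h k l, mul_comm]

lemma LPhiC_sum_smul (A' : E n →ₗ[ℝ] E n) (w ω : Fin n → E n) (c : Fin n → ℝ) (ξ η : E n) :
    LPhiC A' (∑ k, c k • w k) (∑ k, c k • ω k) ξ η = ∑ k, c k • LPhiC A' (w k) (ω k) ξ η := by
  simp only [LPhiC, Qv_sum_smul, map_sum, map_smul, smul_sub, smul_add,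
    Finset.sum_sub_distrib, Finset.sum_add_distrib]

/-- `(q_1,…,q_n)` lies in `Img L^Φ_B`, where `w i` are the columns of `B`. -/
def InImgPhi (w : Fin n → E n) (q : Fin n → E n → E n → E n) : Prop :=
  ∃ (A' : E n →ₗ[ℝ] E n) (ω : Fin n → E n), ∀ i ξ η, q i ξ η = LPhiC A' (w i) (ω i) ξ η

lemma inImgPhi_recombine {w : Fin n → E n} {q : Fin n → E n → E n → E n} (h : InImgPhi w q)
    (C : Matrix (Fin n) (Fin n) ℝ) : InImgPhi (recombine C w) (recombine C q) := by
  obtain ⟨A', ω, hω⟩ := h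
  refine ⟨A', recombine C ω, fun i ξ η => ?_⟩
  simp [recombine_apply, hω, LPhiC_sum_smul]

/-- `Ker L^Ψ_B = Img L^Φ_B`, where `w i` are the columns of `B`. -/
def KerPsiEqImgPhi (w : Fin n → E n) : Prop :=
  ∀ q : Fin n → E n → E n → E n, (∀ i, IsSymmBilin (q i)) → (KerPsi w q ↔ InImgPhi w q)

lemma kerPsiEqImgPhi_recombine {w : Fin n → E n} (h : KerPsiEqImgPhi w)
    {C D : Matrix (Fin n) (Fin n) ℝ} (hDC : D * C = 1) : KerPsiEqImgPhi (recombine C w) := by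
  intro q hq
  have hw : recombine D (recombine C w) = w := by
    rw [recombine_recombine, mul_eq_one_comm.mp hDC, recombine_one]
  have hq' : recombine C (recombine D q) = q := by
    rw [recombine_recombine, hDC, recombine_one]
  have hDq := isSymmBilin_recombine hq D
  constructor
  · intro hK
    have hKD := (h _ hDq).1 (hw ▸ kerPsi_recombine hq hK D)
    exact hq' ▸ inImgPhi_recombine hKD C
  · intro hI
    have hID := (h _ hDq).2 (hw ▸ inImgPhi_recombine hI D)
    exact hq' ▸ kerPsi_recombine hDq hID C

lemma KerPsiEqImgPhi.of_linearIndependent {w w' : Fin n → E n} (hw : LinearIndependent ℝ w)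
    (hw' : LinearIndependent ℝ w') (h : KerPsiEqImgPhi w) : KerPsiEqImgPhi w' := by
  obtain ⟨C, D, hDC, rfl⟩ := exists_recombine_eq hw hw' (by simp)
  exact kerPsiEqImgPhi_recombine h hDC

/-- Lemma `lemma:standard`: for any two bases `B, B' ∈ GL_n(ℝ)`,
`Ker L^Ψ_B = Img L^Φ_B` holds iff `Ker L^Ψ_{B'} = Img L^Φ_{B'}` holds. -/
theorem stmt3 {n : ℕ} (v v' : Fin n → E n)
    (hv : LinearIndependent ℝ v) (hv' : LinearIndependent ℝ v') :
    (∀ q : Fin n → E n → E n → E n, (∀ i, IsSymmBilin (q i)) →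
      (KerPsi v q ↔ ∃ (A' : E n →ₗ[ℝ] E n) (ω : Fin n → E n),
        ∀ i ξ η, q i ξ η = LPhiC A' (v i) (ω i) ξ η)) ↔
    (∀ q : Fin n → E n → E n → E n, (∀ i, IsSymmBilin (q i)) →
      (KerPsi v' q ↔ ∃ (A' : E n →ₗ[ℝ] E n) (ω : Fin n → E n),
        ∀ i ξ η, q i ξ η = LPhiC A' (v' i) (ω i) ξ η)) :=
  ⟨KerPsiEqImgPhi.of_linearIndependent hv hv', KerPsiEqImgPhi.of_linearIndependent hv' hv⟩
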